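/- arXiv:nlin/0701059 — 7 statements merged into one kernel-verified Lean document; each statement's English description precedes it below -/
import Mathlib

section
/- Let F be the n-dimensional Jouanolou system of degree k (n ≥ 2, k ≥ 2) and let d ∈ ℂⁿ be any nonzero solution of F(d) = d. Then the characteristic polynomial of the Kovalevskaya matrix K(d) = F'(d) − E equals det(K(d) − Λ·E) = (−1)ⁿ·((Λ+1)ⁿ − kⁿ). In particular it is the same at every Darboux point. -/
/-!
At a Darboux point `d` the Kovalevskaya matrix `K(d) - Λ E` has `-(Λ + 1)` on the diagonal,
`k d_{i+1}^{k-1}` in position `(i, i + 1)` (indices mod `n`) and zeros elsewhere. Only the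
identity and the cyclic rotation contribute to the Leibniz expansion of the determinant of such
a matrix, so it equals `(-(Λ + 1))ⁿ + (-1)ⁿ⁻¹ kⁿ P^{k-1}` with `P = ∏ dᵢ`. Multiplying the
equations `d_{i+1}^k = dᵢ` gives `P^k = P`, and `P ≠ 0` because a zero coordinate would propagate
around the cycle; hence `P^{k-1} = 1`.
-/

open MvPolynomial
open Fin.NatCast

namespace Fin

variable {n : ℕ} [NeZero n]

lemma add_one_ne_self_of_two_le (hn : 2 ≤ n) (i : Fin n) : i + 1 ≠ i := by
  simp only [ne_eq, add_eq_left, Fin.one_eq_zero_iff]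
  omega

lemma forall_of_forall_add_one {p : Fin n → Prop} (hp : ∀ i, p i → p (i + 1)) {j : Fin n}
    (hj : p j) (i : Fin n) : p i := by
  have hshift : ∀ t : ℕ, p (j + t) := by
    intro t
    induction t with
    | zero => simpa using hj
    | succ t ih => simpa [add_assoc] using hp _ ih
  simpa using hshift (i - j).val

lemma prod_comp_add_one {M : Type*} [CommMonoid M] (f : Fin n → M) :
    ∏ i, f (i + 1) = ∏ i, f i :=
  Equiv.prod_comp (Equiv.addRight 1) f

end Fin

section CyclicBidiagonal

variable {n : ℕ} [NeZero n]

lemma Equiv.Perm.eq_one_or_eq_finRotate (hn : 2 ≤ n) {σ : Equiv.Perm (Fin n)}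
    (h : ∀ i, σ i = i ∨ σ i = i + 1) : σ = 1 ∨ σ = finRotate n := by
  by_cases hfix : ∀ i, σ i = i
  · exact Or.inl (Equiv.ext hfix)
  obtain ⟨j, hj⟩ := not_forall.mp hfix
  -- If `σ i = i + 1`, then `σ (i + 1) = i + 1` would contradict injectivity.
  have hshift : ∀ i, σ i = i + 1 :=
    Fin.forall_of_forall_add_one (p := fun i => σ i = i + 1)
      (fun i hi => (h (i + 1)).resolve_left fun hfix =>
        Fin.add_one_ne_self_of_two_le hn i (σ.injective (hfix.trans hi.symm)))
      ((h j).resolve_left hj)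
  exact Or.inr (Equiv.ext fun i => (hshift i).trans (finRotate_apply i).symm)

variable {R : Type*} [CommRing R]

def cyclicBidiagonal (b : R) (a : Fin n → R) : Matrix (Fin n) (Fin n) R :=
  Matrix.of fun i j => if j = i then b else if j = i + 1 then a i else 0

lemma det_cyclicBidiagonal (hn : 2 ≤ n) (b : R) (a : Fin n → R) :
    (cyclicBidiagonal b a).det = b ^ n + (-1) ^ (n - 1) * ∏ i, a i := by
  have hne := Fin.add_one_ne_self_of_two_le hn
  have hrot : (1 : Equiv.Perm (Fin n)) ≠ finRotate n := fun h =>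
    hne 0 (by simpa [finRotate_apply] using (congrArg (· 0) h).symm)
  rw [← Matrix.det_transpose, Matrix.det_apply, Fintype.sum_eq_add 1 (finRotate n) hrot]
  · simp [cyclicBidiagonal, finRotate_apply, hne, sign_finRotate, Units.smul_def]
  · rintro σ ⟨hσ1, hσrot⟩
    obtain ⟨i, hi, hi'⟩ : ∃ i, σ i ≠ i ∧ σ i ≠ i + 1 := by
      by_contra! hall
      exact (Equiv.Perm.eq_one_or_eq_finRotate hn fun i => or_iff_not_imp_left.mpr (hall i)).elim
        hσ1 hσrot
    rw [Finset.prod_eq_zero (Finset.mem_univ i) (by simp [cyclicBidiagonal, hi, hi']), smul_zero]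

end CyclicBidiagonal

namespace Jouanolou

section

variable {R : Type*} [CommRing R] {n : ℕ} [NeZero n]

lemma eval_pderiv_X_add_one_pow (d : Fin n → R) (k : ℕ) (i j : Fin n) :
    eval d (pderiv j ((X (i + 1) : MvPolynomial (Fin n) R) ^ k))
      = if j = i + 1 then k * d (i + 1) ^ (k - 1) else 0 := by
  by_cases hj : j = i + 1 <;> simp [pderiv_X, hj, eq_comm]

lemma kovalevskaya_sub_smul_one (hn : 2 ≤ n) (k : ℕ) (d : Fin n → R) (Λ : R) :
    (Matrix.of fun i j : Fin n => eval d (pderiv j ((X (i + 1) : MvPolynomial (Fin n) R) ^ k)))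
        - 1 - Λ • 1
      = cyclicBidiagonal (-(Λ + 1)) fun i => k * d (i + 1) ^ (k - 1) := by
  ext i j
  simp only [cyclicBidiagonal, Matrix.sub_apply, Matrix.smul_apply, Matrix.of_apply,
    Matrix.one_apply, eval_pderiv_X_add_one_pow, smul_eq_mul]
  by_cases hji : j = i
  · subst hji
    rw [if_neg (Fin.add_one_ne_self_of_two_le hn j).symm]
    simp only [↓reduceIte]
    ring
  · simp [hji, Ne.symm hji]

end

section

variable {R : Type*} {n k : ℕ} [NeZero n] {d : Fin n → R}

lemma darboux_coord_ne_zero [MonoidWithZero R] (hk : k ≠ 0) (hd : ∀ i, d (i + 1) ^ k = d i)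
    (hd0 : d ≠ 0) (i : Fin n) : d i ≠ 0 := by
  obtain ⟨j, hj⟩ := Function.ne_iff.mp hd0
  exact Fin.forall_of_forall_add_one (p := fun i => d i ≠ 0)
    (fun i hi hzero => hi (by rw [← hd, hzero, zero_pow hk])) hj i

lemma darboux_prod_pow_sub_one [CommRing R] [IsDomain R] (hk : k ≠ 0)
    (hd : ∀ i, d (i + 1) ^ k = d i) (hd0 : d ≠ 0) : (∏ i, d i) ^ (k - 1) = 1 := by
  have hP : ∏ i, d i ≠ 0 :=
    Finset.prod_ne_zero_iff.mpr fun i _ => darboux_coord_ne_zero hk hd hd0 i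
  have hPk : (∏ i, d i) ^ k = ∏ i, d i := by
    calc (∏ i, d i) ^ k = ∏ i, d (i + 1) ^ k := by rw [Finset.prod_pow, Fin.prod_comp_add_one]
      _ = ∏ i, d i := Finset.prod_congr rfl fun i _ => hd i
  refine mul_right_cancel₀ hP ?_
  rw [pow_sub_one_mul hk, hPk, one_mul]

end

end Jouanolou

/-- For the `n`-dimensional Jouanolou system of degree `k` and any
normalized Darboux point `d`, the characteristic polynomial of the Kovalevskaya matrix
`K(d) = F'(d) - E` satisfies `det(K(d) - Λ·E) = (-1)ⁿ·((Λ+1)ⁿ - kⁿ)` for all `Λ`;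
in particular it is the same at every Darboux point. -/
theorem jouanolou_kovalevskaya_charpoly
    (n k : ℕ) [NeZero n] (hn : 2 ≤ n) (hk : 2 ≤ k)
    (d : Fin n → ℂ) (hd0 : d ≠ 0)
    (hd : ∀ i : Fin n, eval d ((X (i + 1) : MvPolynomial (Fin n) ℂ) ^ k) = d i) :
    ∀ Λ : ℂ,
      ((Matrix.of fun i j : Fin n =>
          eval d (pderiv j ((X (i + 1) : MvPolynomial (Fin n) ℂ) ^ k))) - 1
        - Λ • 1).det
      = (-1 : ℂ) ^ n * ((Λ + 1) ^ n - (k : ℂ) ^ n) := by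
  intro Λ
  have hdarboux : ∀ i, d (i + 1) ^ k = d i := by simpa using hd
  have hprod : ∏ i, (k : ℂ) * d (i + 1) ^ (k - 1) = (k : ℂ) ^ n := by
    rw [Finset.prod_mul_distrib, Finset.prod_const, Finset.card_univ, Fintype.card_fin,
      Finset.prod_pow, Fin.prod_comp_add_one,
      Jouanolou.darboux_prod_pow_sub_one (by omega) hdarboux hd0, mul_one]
  rw [Jouanolou.kovalevskaya_sub_smul_one hn, det_cyclicBidiagonal hn, hprod]
  obtain ⟨m, rfl⟩ : ∃ m, n = m + 1 := ⟨n - 1, by omega⟩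
  rw [neg_pow, pow_succ (-1 : ℂ) m, Nat.add_sub_cancel]
  ring
end

section
/- Let F be the n-dimensional Jouanolou system of degree k (n ≥ 2, k ≥ 2) and let d ∈ ℂⁿ be any nonzero solution of F(d) = d. Then the multiset of eigenvalues of the Kovalevskaya matrix K(d) = F'(d) − E is exactly {k·ζ − 1 : ζⁿ = 1}, i.e. the Kovalevskaya exponents are Λᵢ = k·ε^{i} − 1, i = 1,…,n, where ε is a primitive n-th root of unity; the value k − 1 (obtained for ζ = 1) is the trivial exponent. -/
/-!
For every `ζ` with `ζ ^ n = 1` the vector `v i = d i * ζ ^ i` is an eigenvector of `F'(d)` with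
eigenvalue `k * ζ`: since `F'(d)` only has the entries `k * d (i + 1) ^ (k - 1)` in position
`(i, i + 1)`, the Darboux relation `d (i + 1) ^ k = d i` gives
`(F'(d) v) i = k * d (i + 1) ^ k * ζ ^ (i + 1) = k * ζ * v i`.
Taking `ζ = ε ^ (i + 1)` produces `n` distinct roots `k * ε ^ (i + 1) - 1` of the characteristic
polynomial of `K(d)`, which has degree `n`, so they are all of its roots.
-/

open MvPolynomial Matrix

theorem Polynomial.roots_eq_of_nodup_of_isRoot {R : Type*} [CommRing R] [IsDomain R]
    {p : Polynomial R} (hp : p ≠ 0) {s : Multiset R} (hs : s.Nodup)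
    (hdeg : p.natDegree ≤ Multiset.card s) (hroot : ∀ a ∈ s, p.IsRoot a) : p.roots = s :=
  (Multiset.eq_of_le_of_card_le
    ((Multiset.le_iff_subset hs).2 fun a ha => (mem_roots hp).2 (hroot a ha))
    ((card_roots' p).trans hdeg)).symm

theorem Matrix.isRoot_charpoly_of_mulVec_eq_smul {K ι : Type*} [Field K] [Fintype ι]
    [DecidableEq ι] {A : Matrix ι ι K} {v : ι → K} {μ : K} (hv : v ≠ 0) (h : A *ᵥ v = μ • v) :
    A.charpoly.IsRoot μ := by
  rw [Polynomial.IsRoot, eval_charpoly, ← exists_mulVec_eq_zero_iff]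
  refine ⟨v, hv, ?_⟩
  rw [sub_mulVec, h, sub_eq_zero]
  ext i
  simp [mulVec_diagonal]

theorem pow_val_add_one_of_pow_eq_one {M : Type*} [Monoid M] {n : ℕ} [NeZero n] {ζ : M}
    (hζ : ζ ^ n = 1) (i : Fin n) : ζ ^ (i + 1 : Fin n).val = ζ ^ i.val * ζ := by
  rw [Fin.val_add, ← pow_eq_pow_mod _ hζ, pow_add, Fin.val_one', ← pow_eq_pow_mod _ hζ, pow_one]

theorem IsPrimitiveRoot.nodup_map_range_pow_succ {K : Type*} [Field K] {ε : K} {n : ℕ} [NeZero n]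
    (hε : IsPrimitiveRoot ε n) : ((Multiset.range n).map fun i => ε ^ (i + 1)).Nodup := by
  refine (Multiset.nodup_range n).map_on fun i hi j hj hij => ?_
  rw [pow_succ, pow_succ] at hij
  exact hε.pow_inj (Multiset.mem_range.mp hi) (Multiset.mem_range.mp hj)
    (mul_right_cancel₀ (hε.ne_zero (NeZero.ne n)) hij)

section JacobianOfPowers

variable {R ι : Type*} [CommRing R] [Fintype ι] [DecidableEq ι]

theorem jacobian_X_pow_comp_mulVec (σ : ι → ι) (k : ℕ) (d v : ι → R) :
    (Matrix.of fun i j => eval d (pderiv j ((X (σ i) : MvPolynomial ι R) ^ k))) *ᵥ v =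
      fun i => k * d (σ i) ^ (k - 1) * v (σ i) := by
  ext i
  simp [mulVec, dotProduct, pderiv_X, Pi.single_apply, apply_ite (eval d), ite_mul]

theorem jacobian_X_pow_comp_mulVec_eq_smul {σ : ι → ι} {k : ℕ} (hk : k ≠ 0) {d w : ι → R}
    {ζ : R} (hd : ∀ i, d (σ i) ^ k = d i) (hw : ∀ i, w (σ i) = w i * ζ) :
    (Matrix.of fun i j => eval d (pderiv j ((X (σ i) : MvPolynomial ι R) ^ k))) *ᵥ (d * w) =
      (k * ζ) • (d * w) := by
  rw [jacobian_X_pow_comp_mulVec]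
  ext i
  calc (k : R) * d (σ i) ^ (k - 1) * (d (σ i) * w (σ i))
      = k * (d (σ i) ^ (k - 1) * d (σ i)) * w (σ i) := by ring
    _ = (k * ζ) * (d i * w i) := by rw [pow_sub_one_mul hk, hd, hw]; ring

end JacobianOfPowers

theorem jouanolou_isRoot_charpoly {K : Type*} [Field K] {n k : ℕ} [NeZero n] (hk : k ≠ 0)
    {d : Fin n → K} (hd0 : d ≠ 0) (hd : ∀ i, d (i + 1) ^ k = d i) {ζ : K} (hζ : ζ ^ n = 1) :
    ((Matrix.of fun i j : Fin n =>
        eval d (pderiv j ((X (i + 1) : MvPolynomial (Fin n) K) ^ k))) - 1).charpoly.IsRoot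
      (k * ζ - 1) := by
  have hζ0 : ζ ≠ 0 := by rintro rfl; simp [NeZero.ne n] at hζ
  set v : Fin n → K := d * fun i => ζ ^ i.val
  have hv : v ≠ 0 := by
    obtain ⟨i, hi⟩ := Function.ne_iff.mp hd0
    exact Function.ne_iff.mpr ⟨i, mul_ne_zero hi (pow_ne_zero _ hζ0)⟩
  refine isRoot_charpoly_of_mulVec_eq_smul hv ?_
  rw [sub_mulVec, one_mulVec,
    jacobian_X_pow_comp_mulVec_eq_smul hk hd (pow_val_add_one_of_pow_eq_one hζ), sub_smul, one_smul]

theorem jouanolou_kovalevskaya_exponents_general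
    (n k : ℕ) [NeZero n] (hk : 2 ≤ k)
    (d : Fin n → ℂ) (hd0 : d ≠ 0)
    (hd : ∀ i : Fin n, eval d ((X (i + 1) : MvPolynomial (Fin n) ℂ) ^ k) = d i)
    (ε : ℂ) (hε : IsPrimitiveRoot ε n) :
    (((Matrix.of fun i j : Fin n =>
          eval d (pderiv j ((X (i + 1) : MvPolynomial (Fin n) ℂ) ^ k))) - 1).charpoly.roots
      = (Multiset.range n).map (fun i => (k : ℂ) * ε ^ (i + 1) - 1)) ∧
    ((k : ℂ) - 1) ∈
      (((Matrix.of fun i j : Fin n =>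
          eval d (pderiv j ((X (i + 1) : MvPolynomial (Fin n) ℂ) ^ k))) - 1).charpoly.roots) := by
  have hk0 : k ≠ 0 := by omega
  have hd' : ∀ i : Fin n, d (i + 1) ^ k = d i := fun i => by simpa using hd i
  have hnodup : ((Multiset.range n).map fun i => (k : ℂ) * ε ^ (i + 1) - 1).Nodup := by
    have hinj : Function.Injective fun z : ℂ => k * z - 1 :=
      sub_left_injective.comp (mul_right_injective₀ (Nat.cast_ne_zero.mpr hk0))
    simpa [Multiset.map_map, Function.comp_def] using hε.nodup_map_range_pow_succ.map hinj
  set K := (Matrix.of fun i j : Fin n =>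
    eval d (pderiv j ((X (i + 1) : MvPolynomial (Fin n) ℂ) ^ k))) - 1
  have hroots : K.charpoly.roots = (Multiset.range n).map fun i => (k : ℂ) * ε ^ (i + 1) - 1 := by
    refine Polynomial.roots_eq_of_nodup_of_isRoot K.charpoly_monic.ne_zero hnodup (by simp) ?_
    intro μ hμ
    obtain ⟨i, -, rfl⟩ := Multiset.mem_map.mp hμ
    refine jouanolou_isRoot_charpoly hk0 hd0 hd' ?_
    rw [← pow_mul, mul_comm, pow_mul, hε.pow_eq_one, one_pow]
  refine ⟨hroots, hroots ▸ Multiset.mem_map.mpr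
    ⟨n - 1, Multiset.mem_range.mpr (Nat.sub_one_lt (NeZero.ne n)), ?_⟩⟩
  rw [Nat.sub_add_cancel NeZero.one_le, hε.pow_eq_one, mul_one]

/-- For the `n`-dimensional Jouanolou system of degree `k` and any
normalized Darboux point `d`, the multiset of eigenvalues (roots of the characteristic
polynomial, with multiplicity) of the Kovalevskaya matrix `K(d) = F'(d) - E` is exactly
`{k·εⁱ - 1 : i = 1,…,n}` where `ε` is a primitive `n`-th root of unity; the value
`k - 1` (for `ζ = 1`) is among them (the trivial exponent). -/
theorem jouanolou_kovalevskaya_exponents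
    (n k : ℕ) [NeZero n] (hn : 2 ≤ n) (hk : 2 ≤ k)
    (d : Fin n → ℂ) (hd0 : d ≠ 0)
    (hd : ∀ i : Fin n, eval d ((X (i + 1) : MvPolynomial (Fin n) ℂ) ^ k) = d i)
    (ε : ℂ) (hε : IsPrimitiveRoot ε n) :
    (((Matrix.of fun i j : Fin n =>
          eval d (pderiv j ((X (i + 1) : MvPolynomial (Fin n) ℂ) ^ k))) - 1).charpoly.roots
      = (Multiset.range n).map (fun i => (k : ℂ) * ε ^ (i + 1) - 1)) ∧
    ((k : ℂ) - 1) ∈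
      (((Matrix.of fun i j : Fin n =>
          eval d (pderiv j ((X (i + 1) : MvPolynomial (Fin n) ℂ) ^ k))) - 1).charpoly.roots) :=
  jouanolou_kovalevskaya_exponents_general n k hk d hd0 hd ε hε
end

section
/- Let n ≥ 2, let k be an integer (k ≥ 2), let ε ∈ ℂ be a primitive n-th root of unity, and let Λ = (Λ₁,…,Λ_{n−1}) with Λⱼ = k·ε^{j} − 1 for j = 1,…,n−1 (the nontrivial Kovalevskaya exponents of the Jouanolou system). Then for every 0 ≤ r ≤ n−1 the elementary symmetric polynomial of degree r satisfies τ_r(Λ) = (−1)^r · Σ_{i=0}^{r} C(n−i−1, r−i) · k^{i}. In particular τ₁(Λ) = 1 − n − k and τ_{n−1}(Λ) = (−1)^{n−1}(kⁿ−1)/(k−1). -/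
/-!
The numbers `ε, ε², …, εⁿ⁻¹` are the roots of `(Xⁿ - 1) / (X - 1) = 1 + X + ⋯ + Xⁿ⁻¹`, so by
Vieta their elementary symmetric functions are `τᵢ = (-1)ⁱ`. Scaling the roots by `k`
multiplies `τᵢ` by `kⁱ`, and shifting them by `-1` mixes the `τᵢ` with binomial weights,
which is where the coefficients `C(n-i-1, r-i)` come from.
-/

open Polynomial Finset

namespace Multiset

variable {R : Type*} [CommSemiring R]

theorem esymm_map_add_const (s : Multiset R) (c : R) {r : ℕ} (hr : r ≤ card s) :
    (s.map (· + c)).esymm r =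
      ∑ i ∈ Finset.range (r + 1), ((card s - i).choose (r - i) : R) * c ^ (r - i) * s.esymm i := by
  set m := card s
  have hprod : ((s.map (· + c)).map fun a => X + C a).prod =
      ∑ j ∈ Finset.range (m + 1), C (s.esymm j) * (X + C c) ^ (m - j) := by
    have hcomp : ((s.map (· + c)).map fun a => X + C a).prod =
        ((s.map fun a => X + C a).prod).comp (X + C c) := by
      simp only [multiset_prod_comp, map_map]
      refine congrArg _ (map_congr rfl fun a _ => ?_)
      simp only [Function.comp_apply, add_comp, X_comp, C_comp, C_add]
      ring
    rw [hcomp, prod_X_add_C_eq_sum_esymm, Polynomial.sum_comp]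
    simp only [mul_comp, C_comp, pow_comp, X_comp, m]
  have hcoeff := prod_X_add_C_coeff (s.map (· + c)) (k := m - r) (by simp [m])
  rw [card_map, Nat.sub_sub_self hr, hprod, finsetSum_coeff] at hcoeff
  simp only [coeff_C_mul, coeff_X_add_C_pow] at hcoeff
  rw [← hcoeff, ← sum_subset (Finset.range_subset_range.mpr (by omega : r + 1 ≤ m + 1))]
  · refine sum_congr rfl fun i hi => ?_
    have hi : i ≤ r := Nat.lt_succ_iff.mp (Finset.mem_range.mp hi)
    rw [Nat.choose_symm_of_eq_add (by omega : m - i = (m - r) + (r - i)),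
      show m - i - (m - r) = r - i by omega]
    ring
  · intro i him hir
    simp only [Finset.mem_range] at him hir
    rw [Nat.choose_eq_zero_of_lt (by omega), Nat.cast_zero, mul_zero, mul_zero]

end Multiset

namespace IsPrimitiveRoot

variable {R : Type*} [CommRing R] [IsDomain R]

theorem prod_X_sub_C_pow_succ_eq_sum_X_pow {m : ℕ} {ε : R} (hε : IsPrimitiveRoot ε (m + 1)) :
    ∏ j ∈ range m, (X - C (ε ^ (j + 1))) = ∑ i ∈ range (m + 1), X ^ i := by
  have h := X_pow_sub_C_eq_prod hε m.succ_pos (one_pow (m + 1))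
  rw [C_1, ← mul_geom_sum, prod_range_succ', pow_zero] at h
  simp only [mul_one] at h
  exact (mul_right_cancel₀ (X_sub_C_ne_zero 1) (by rwa [mul_comm, C_1] at h)).symm

theorem esymm_map_pow_succ {m : ℕ} {ε : R} (hε : IsPrimitiveRoot ε (m + 1)) {i : ℕ} (hi : i ≤ m) :
    ((Multiset.range m).map (fun j => ε ^ (j + 1))).esymm i = (-1) ^ i := by
  have h := Multiset.prod_X_sub_C_coeff ((Multiset.range m).map (fun j => ε ^ (j + 1)))
    (k := m - i) (by simp)
  simp only [Multiset.map_map, Function.comp_def] at h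
  rw [show (((Multiset.range m).map _).prod : R[X]) = ∏ j ∈ range m, (X - C (ε ^ (j + 1))) from rfl,
    hε.prod_X_sub_C_pow_succ_eq_sum_X_pow, finsetSum_coeff] at h
  simp only [coeff_X_pow, sum_ite_eq, mem_range, Multiset.card_map, Multiset.card_range,
    Nat.sub_sub_self hi] at h
  rw [if_pos (by omega)] at h
  calc _ = ((-1) ^ i * (-1) ^ i) * ((Multiset.range m).map (fun j => ε ^ (j + 1))).esymm i := by
        rw [← mul_pow, neg_one_mul, neg_neg, one_pow, one_mul]
    _ = (-1) ^ i := by rw [mul_assoc, ← h, mul_one]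

theorem esymm_map_mul_pow_succ_sub_one {m : ℕ} {ε : R} (hε : IsPrimitiveRoot ε (m + 1)) (c : R)
    {r : ℕ} (hr : r ≤ m) :
    ((Multiset.range m).map fun j => c * ε ^ (j + 1) - 1).esymm r =
      (-1) ^ r * ∑ i ∈ range (r + 1), ((m - i).choose (r - i) : R) * c ^ i := by
  have hmap : (Multiset.range m).map (fun j => c * ε ^ (j + 1) - 1) =
      (((Multiset.range m).map fun j => ε ^ (j + 1)).map (c • ·)).map (· + -1) := by
    simp only [Multiset.map_map, Function.comp_def, smul_eq_mul, sub_eq_add_neg]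
  rw [hmap, Multiset.esymm_map_add_const _ _ (by simpa using hr), mul_sum]
  refine sum_congr rfl fun i hi => ?_
  have hi : i ≤ r := Nat.lt_succ_iff.mp (mem_range.mp hi)
  have hsign : (-1 : R) ^ (r - i) * (-1) ^ i = (-1) ^ r := by rw [← pow_add, Nat.sub_add_cancel hi]
  rw [← Multiset.pow_smul_esymm, hε.esymm_map_pow_succ (hi.trans hr), smul_eq_mul,
    Multiset.card_map, Multiset.card_map, Multiset.card_range]
  linear_combination ((m - i).choose (r - i) : R) * c ^ i * hsign

end IsPrimitiveRoot

/-- For the nontrivial Kovalevskaya exponents `Λⱼ = k·εʲ - 1`,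
`j = 1,…,n-1`, of the Jouanolou system (`ε` a primitive `n`-th root of unity), the
elementary symmetric polynomials satisfy
`τ_r(Λ) = (-1)^r · Σ_{i=0}^r C(n-i-1, r-i)·kⁱ` for `0 ≤ r ≤ n-1`; in particular
`τ₁(Λ) = 1 - n - k` and `τ_{n-1}(Λ) = (-1)^{n-1}(kⁿ-1)/(k-1)`. -/
theorem jouanolou_esymm_of_exponents
    (n k : ℕ) (hn : 2 ≤ n) (hk : 2 ≤ k)
    (ε : ℂ) (hε : IsPrimitiveRoot ε n) :
    (∀ r : ℕ, r ≤ n - 1 →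
      ((Multiset.range (n - 1)).map (fun j => (k : ℂ) * ε ^ (j + 1) - 1)).esymm r
        = (-1 : ℂ) ^ r *
          ∑ i ∈ Finset.range (r + 1), ((n - i - 1).choose (r - i) : ℂ) * (k : ℂ) ^ i) ∧
    ((Multiset.range (n - 1)).map (fun j => (k : ℂ) * ε ^ (j + 1) - 1)).esymm 1
      = 1 - (n : ℂ) - (k : ℂ) ∧
    ((Multiset.range (n - 1)).map (fun j => (k : ℂ) * ε ^ (j + 1) - 1)).esymm (n - 1)
      = (-1 : ℂ) ^ (n - 1) * ((k : ℂ) ^ n - 1) / ((k : ℂ) - 1) := by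
  obtain ⟨m, rfl⟩ : ∃ m, n = m + 1 := ⟨n - 1, by omega⟩
  simp only [Nat.add_sub_cancel, Nat.sub_right_comm _ _ 1]
  have hk1 : (k : ℂ) ≠ 1 := by exact_mod_cast (by omega : k ≠ 1)
  refine ⟨fun r hr => hε.esymm_map_mul_pow_succ_sub_one _ hr, ?_, ?_⟩
  · rw [hε.esymm_map_mul_pow_succ_sub_one _ (by omega)]
    rw [sum_range_succ, sum_range_one]
    simp only [Nat.sub_zero, Nat.sub_self, Nat.choose_one_right, Nat.choose_zero_right]
    push_cast
    ring
  · rw [hε.esymm_map_mul_pow_succ_sub_one _ le_rfl]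
    simp only [Nat.choose_self, Nat.cast_one, one_mul, geom_sum_eq hk1, mul_div_assoc]
end

section
/- Let n ≥ 2, let k ≥ 2 be an integer, let ε ∈ ℂ be a primitive n-th root of unity, and let Λ = (Λ₁,…,Λ_{n−1}) with Λⱼ = k·ε^{j} − 1 (the common nontrivial Kovalevskaya exponents at each of the D(n,k) = (kⁿ−1)/(k−1) Darboux points of the n-dimensional Jouanolou system of degree k). Then for every 0 ≤ r ≤ n−1, D(n,k) · τ₁(Λ)^r / τ_{n−1}(Λ) = (−1)^{n−1}·(1−n−k)^r. (This is the universal value R(τ₁^r, n, k) of the Darboux-point sum Σ_d τ₁(Λ(d))^r/τ_{n−1}(Λ(d)).) -/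
/-!
The nontrivial exponents are `k ζ - 1` with `ζ` running over the nontrivial `n`-th roots of unity.
Their sum is `1 - n - k` because the nontrivial roots sum to `-1`. Their product is
`(-1)^(n-1) D(n,k)`: evaluating `Xⁿ - kⁿ = ∏ (X - ζ k)` at `X = 1` gives `∏ (1 - k ζ) = 1 - kⁿ`,
and the trivial root contributes the factor `1 - k`. Since `((-1)^(n-1))⁻¹ = (-1)^(n-1)`,
the factor `D(n,k)` cancels.
-/

open Finset Polynomial

namespace Multiset

variable {R : Type*} [CommSemiring R]

theorem esymm_one (s : Multiset R) : s.esymm 1 = s.sum := by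
  simp [esymm, powersetCard_one, map_map]

theorem esymm_card (s : Multiset R) : s.esymm (card s) = s.prod := by
  simp [esymm, powersetCard_self]

end Multiset

namespace IsPrimitiveRoot

variable {R : Type*} [CommRing R] [IsDomain R] {n : ℕ} {ζ : R}

theorem sum_range_pow_succ (hζ : IsPrimitiveRoot ζ n) (hn : 1 < n) :
    ∑ j ∈ range (n - 1), ζ ^ (j + 1) = -1 := by
  have h := hζ.geom_sum_eq_zero hn
  rw [← Nat.sub_add_cancel hn.le, sum_range_succ', pow_zero] at h
  exact eq_neg_of_add_eq_zero_left h

theorem prod_range_one_sub_mul_pow (hζ : IsPrimitiveRoot ζ n) (hn : 0 < n) (a : R) :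
    ∏ j ∈ range n, (1 - a * ζ ^ j) = 1 - a ^ n := by
  have h := congrArg (eval 1) (X_pow_sub_C_eq_prod hζ hn (rfl : a ^ n = a ^ n))
  simp only [eval_sub, eval_pow, eval_X, eval_C, eval_prod, one_pow] at h
  rw [h]
  exact prod_congr rfl fun j _ => by ring

theorem sum_range_mul_pow_succ_sub_one (hζ : IsPrimitiveRoot ζ n) (hn : 1 < n) (a : R) :
    ∑ j ∈ range (n - 1), (a * ζ ^ (j + 1) - 1) = 1 - n - a := by
  rw [sum_sub_distrib, ← mul_sum, hζ.sum_range_pow_succ hn, sum_const, card_range,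
    nsmul_one, Nat.cast_sub hn.le]
  ring

theorem sub_one_mul_prod_range_mul_pow_succ_sub_one (hζ : IsPrimitiveRoot ζ n) (hn : 0 < n)
    (a : R) :
    (a - 1) * ∏ j ∈ range (n - 1), (a * ζ ^ (j + 1) - 1) = (-1) ^ (n - 1) * (a ^ n - 1) := by
  obtain ⟨m, rfl⟩ := Nat.exists_eq_add_one_of_ne_zero hn.ne'
  have h := hζ.prod_range_one_sub_mul_pow hn a
  rw [prod_range_succ', pow_zero, mul_one] at h
  have hsign : ∏ j ∈ range m, (a * ζ ^ (j + 1) - 1)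
      = (-1) ^ m * ∏ j ∈ range m, (1 - a * ζ ^ (j + 1)) := by
    rw [← card_range m, ← prod_const, card_range, ← prod_mul_distrib]
    exact prod_congr rfl fun j _ => by ring
  rw [Nat.add_sub_cancel, hsign]
  linear_combination (-(-1 : R) ^ m) * h

end IsPrimitiveRoot

/-- With `Λⱼ = k·εʲ - 1`, `j = 1,…,n-1`, the common nontrivial
Kovalevskaya exponents at each of the `D(n,k) = (kⁿ-1)/(k-1)` Darboux points of the
Jouanolou system, for every `0 ≤ r ≤ n-1` one has
`D(n,k)·τ₁(Λ)^r / τ_{n-1}(Λ) = (-1)^{n-1}·(1-n-k)^r`, the universal value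
`R(τ₁^r, n, k)`. -/
theorem jouanolou_R_tau1_pow
    (n k : ℕ) (hn : 2 ≤ n) (hk : 2 ≤ k)
    (ε : ℂ) (hε : IsPrimitiveRoot ε n)
    (Λ : Multiset ℂ)
    (hΛ : Λ = (Multiset.range (n - 1)).map (fun j => (k : ℂ) * ε ^ (j + 1) - 1)) :
    ∀ r : ℕ, r ≤ n - 1 →
      (((k : ℂ) ^ n - 1) / ((k : ℂ) - 1)) * (Λ.esymm 1) ^ r / Λ.esymm (n - 1)
        = (-1 : ℂ) ^ (n - 1) * (1 - (n : ℂ) - (k : ℂ)) ^ r := by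
  intro r _
  have hk1 : (k : ℂ) - 1 ≠ 0 := sub_ne_zero.mpr (by exact_mod_cast (by omega : k ≠ 1))
  have hkn : (k : ℂ) ^ n - 1 ≠ 0 :=
    sub_ne_zero.mpr (by exact_mod_cast (Nat.one_lt_pow (by omega) (by omega)).ne')
  have hsum : Λ.esymm 1 = 1 - n - k := by
    rw [Multiset.esymm_one, hΛ]
    exact hε.sum_range_mul_pow_succ_sub_one (by omega) k
  have hprod : ((k : ℂ) - 1) * Λ.esymm (n - 1) = (-1) ^ (n - 1) * ((k : ℂ) ^ n - 1) := by
    have hcard : Multiset.card Λ = n - 1 := by simp [hΛ]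
    rw [show Λ.esymm (n - 1) = Λ.prod from hcard ▸ Multiset.esymm_card Λ, hΛ]
    exact hε.sub_one_mul_prod_range_mul_pow_succ_sub_one (by omega) k
  have hsign : ((-1 : ℂ) ^ (n - 1)) ^ 2 = 1 := by
    rw [← pow_mul, mul_comm, pow_mul, neg_one_sq, one_pow]
  have hΛ0 : Λ.esymm (n - 1) ≠ 0 := by
    rintro h
    rw [h, mul_zero] at hprod
    exact hkn (by simpa using hprod.symm)
  rw [hsum, div_eq_iff hΛ0, div_mul_eq_mul_div, div_eq_iff hk1]
  linear_combination (1 - (n : ℂ) - k) ^ r * (-(-1) ^ (n - 1) * hprod - (k ^ n - 1) * hsign)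
end

section
/- Let n ≥ 2, let k ≥ 2 be an integer, let ε ∈ ℂ be a primitive n-th root of unity, and let Λ = (Λ₁,…,Λ_{n−1}) with Λⱼ = k·ε^{j} − 1 (the common nontrivial Kovalevskaya exponents at each of the D(n,k) = (kⁿ−1)/(k−1) Darboux points of the n-dimensional Jouanolou system of degree k). Then for every 0 ≤ r ≤ n−1, D(n,k) · τ_r(Λ) / τ_{n−1}(Λ) = (−1)^{r+1−n} · Σ_{i=0}^{r} C(n−i−1, r−i) · k^{i}. (This is the universal value R(τ_r, n, k); for r = n−2 it equals −(kⁿ − n(k−1) − 1)/(k−1)².) -/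
/-!
Since `Λⱼ + 1 = k εʲ` runs over the roots of `(Xⁿ - kⁿ)/(X - k) = ∑_{m<n} kⁿ⁻¹⁻ᵐ Xᵐ`, the monic
polynomial with roots `Λⱼ` is `∑_{m<n} kⁿ⁻¹⁻ᵐ (X + 1)ᵐ`. Reading off its coefficients by Vieta gives
`τ_r(Λ) = (-1)ʳ ∑_{i ≤ r} C(n-i-1, r-i) kⁱ`; in particular `τ_{n-1}(Λ) = (-1)ⁿ⁻¹ D(n,k)`, and the
quotient follows.
-/

open Finset

theorem sum_range_choose_mul_pow_reflect {S : Type*} [CommSemiring S] (a : S) {n r : ℕ}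
    (hr : r < n) :
    ∑ m ∈ range n, (m.choose (n - 1 - r) : S) * a ^ (n - 1 - m)
      = ∑ i ∈ range (r + 1), ((n - i - 1).choose (r - i) : S) * a ^ i := by
  rw [← sum_range_reflect]
  refine (sum_subset (range_subset_range.2 hr) fun i hin hir => ?_).symm.trans
    (sum_congr rfl fun i hi => ?_)
  · simp only [mem_range, not_lt] at hin hir
    rw [Nat.choose_eq_zero_of_lt (by omega), Nat.cast_zero, zero_mul]
  · have hir : i ≤ r := Nat.lt_succ_iff.1 (mem_range.1 hi)
    rw [show n - 1 - (n - 1 - i) = i by omega, show n - 1 - i = n - i - 1 by omega,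
      show n - 1 - r = n - i - 1 - (r - i) by omega, Nat.choose_symm (by omega)]

namespace Polynomial

theorem _root_.IsPrimitiveRoot.prod_X_sub_C_mul_pow_succ {R : Type*} [CommRing R] [IsDomain R]
    {ε : R} {n : ℕ} (hε : IsPrimitiveRoot ε n) (hn : 0 < n) (a : R) :
    ∏ j ∈ range (n - 1), (X - C (a * ε ^ (j + 1))) = ∑ m ∈ range n, X ^ m * C a ^ (n - 1 - m) := by
  apply mul_right_cancel₀ (X_sub_C_ne_zero a)
  rw [geom_sum₂_mul, ← C_pow, X_pow_sub_C_eq_prod hε hn rfl, ← Nat.sub_add_cancel hn,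
    prod_range_succ', Nat.add_sub_cancel]
  simp only [pow_zero, one_mul, mul_comm a]

theorem _root_.Multiset.prod_X_sub_C_map_sub_one {R : Type*} [CommRing R] (s : Multiset R) :
    ((s.map (· - 1)).map fun t => X - C t).prod = (s.map fun t => X - C t).prod.comp (X + 1) := by
  rw [Multiset.map_map, multiset_prod_comp, Multiset.map_map]
  congr 1
  refine Multiset.map_congr rfl fun t _ => ?_
  simp only [Function.comp_apply, sub_comp, X_comp, C_comp, map_sub, map_one]
  ring

theorem coeff_sum_X_pow_mul_C_pow_comp_X_add_one {R : Type*} [CommSemiring R] (a : R) (n j : ℕ) :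
    ((∑ m ∈ range n, X ^ m * C a ^ (n - 1 - m)).comp (X + 1)).coeff j
      = ∑ m ∈ range n, (m.choose j : R) * a ^ (n - 1 - m) := by
  simp only [sum_comp, mul_comp, X_pow_comp, ← C_pow, C_comp, finsetSum_coeff, coeff_mul_C,
    coeff_X_add_one_pow]

theorem _root_.IsPrimitiveRoot.esymm_map_mul_pow_succ_sub_one_s8 {R : Type*} [CommRing R] [IsDomain R]
    {ε : R} {n : ℕ} (hε : IsPrimitiveRoot ε n) (a : R) {r : ℕ} (hr : r < n) :
    ((Multiset.range (n - 1)).map fun j => a * ε ^ (j + 1) - 1).esymm r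
      = (-1) ^ r * ∑ i ∈ range (r + 1), ((n - i - 1).choose (r - i) : R) * a ^ i := by
  set μ := (Multiset.range (n - 1)).map fun j => a * ε ^ (j + 1)
  have hΛ : ((Multiset.range (n - 1)).map fun j => a * ε ^ (j + 1) - 1) = μ.map (· - 1) := by
    rw [Multiset.map_map]; rfl
  have hcard : Multiset.card (μ.map (· - 1)) = n - 1 := by simp [μ]
  have hμ : (μ.map fun t => X - C t).prod = ∏ j ∈ range (n - 1), (X - C (a * ε ^ (j + 1))) := by
    rw [Multiset.map_map]; rfl
  have hvieta := (μ.map (· - 1)).prod_X_sub_C_coeff (k := n - 1 - r) (by omega)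
  rw [μ.prod_X_sub_C_map_sub_one, hμ, hε.prod_X_sub_C_mul_pow_succ (by omega),
    coeff_sum_X_pow_mul_C_pow_comp_X_add_one, sum_range_choose_mul_pow_reflect a hr, hcard,
    show n - 1 - (n - 1 - r) = r by omega] at hvieta
  rw [hΛ, hvieta, ← mul_assoc, ← mul_pow, neg_one_mul, neg_neg, one_pow, one_mul]

end Polynomial

theorem IsPrimitiveRoot.esymm_map_mul_pow_succ_sub_one_pred {R : Type*} [CommRing R] [IsDomain R]
    {ε : R} {n : ℕ} (hε : IsPrimitiveRoot ε n) (hn : 0 < n) (a : R) :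
    ((Multiset.range (n - 1)).map fun j => a * ε ^ (j + 1) - 1).esymm (n - 1)
      = (-1) ^ (n - 1) * ∑ i ∈ range n, a ^ i := by
  rw [hε.esymm_map_mul_pow_succ_sub_one_s8 a (by omega), Nat.sub_add_cancel hn]
  congr 1
  refine sum_congr rfl fun i hi => ?_
  rw [show n - i - 1 = n - 1 - i by omega, Nat.choose_self, Nat.cast_one, one_mul]

/-- With `Λⱼ = k·εʲ - 1`, `j = 1,…,n-1`, the common nontrivial
Kovalevskaya exponents at each of the `D(n,k) = (kⁿ-1)/(k-1)` Darboux points of the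
Jouanolou system, for every `0 ≤ r ≤ n-1` one has
`D(n,k)·τ_r(Λ) / τ_{n-1}(Λ) = (-1)^{r+1-n} · Σ_{i=0}^r C(n-i-1, r-i)·kⁱ`, the
universal value `R(τ_r, n, k)`. -/
theorem jouanolou_R_tau_r
    (n k : ℕ) (hn : 2 ≤ n) (hk : 2 ≤ k)
    (ε : ℂ) (hε : IsPrimitiveRoot ε n)
    (Λ : Multiset ℂ)
    (hΛ : Λ = (Multiset.range (n - 1)).map (fun j => (k : ℂ) * ε ^ (j + 1) - 1)) :
    ∀ r : ℕ, r ≤ n - 1 →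
      (((k : ℂ) ^ n - 1) / ((k : ℂ) - 1)) * Λ.esymm r / Λ.esymm (n - 1)
        = (-1 : ℂ) ^ ((r : ℤ) + 1 - (n : ℤ)) *
          ∑ i ∈ Finset.range (r + 1), ((n - i - 1).choose (r - i) : ℂ) * (k : ℂ) ^ i := by
  intro r hr
  subst hΛ
  have hD : ((k : ℂ) ^ n - 1) / ((k : ℂ) - 1) = ∑ i ∈ range n, (k : ℂ) ^ i :=
    (geom_sum_eq (by exact_mod_cast (by omega : k ≠ 1)) n).symm
  have hD0 : ∑ i ∈ range n, (k : ℂ) ^ i ≠ 0 := by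
    exact_mod_cast (sum_pos (fun i _ => by positivity) (nonempty_range_iff.2 (by omega))).ne'
  have hsign : (-1 : ℂ) ^ ((r : ℤ) + 1 - n) = (-1) ^ r / (-1) ^ (n - 1) := by
    rw [show (r : ℤ) + 1 - n = r - (n - 1 : ℕ) by omega, zpow_sub₀ (by norm_num), zpow_natCast,
      zpow_natCast]
  rw [hD, hε.esymm_map_mul_pow_succ_sub_one_s8 _ (by omega),
    hε.esymm_map_mul_pow_succ_sub_one_pred (by omega), hsign]
  field_simp
end

section
/- Let S ⊆ ℝ \ {0} be a set of nonzero real numbers such that (i) S ⊆ (−∞,−1] ∪ (0,∞), and (ii) the only possible accumulation point of S is 0 (i.e. S ∩ ((−∞,−δ] ∪ [δ,∞)) is finite for every δ > 0; in particular S has only finitely many negative elements). Then for every c ∈ ℝ and every m ∈ ℕ, the set of m-tuples (X₁,…,X_m) ∈ S^m satisfying X₁ + ⋯ + X_m = c is finite. -/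
/-!
Induct on `m`. Every tuple in `S^(m+1)` summing to `c` has an entry in the finite set
`S ∩ ((-∞,-1] ∪ [δ,∞))`, for a suitable `δ > 0`: either some entry is `≤ -1`, or all entries
are positive, so `c > 0` and the largest entry is at least the average `c / (m+1)`.
Fixing the position `i` and the value `x` of that entry, the remaining `m` entries lie in `S`
and sum to `c - x`, so there are finitely many choices by induction.
-/

open Set

theorem Set.Finite.of_forall_exists_mem_of_finite_removeNth {α : Type*} {m : ℕ}
    {A : Set (Fin (m + 1) → α)} {G : Set α} (hG : G.Finite) (hA : ∀ X ∈ A, ∃ i, X i ∈ G)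
    (hslice : ∀ i, ∀ x ∈ G, (i.removeNth '' {X ∈ A | X i = x}).Finite) : A.Finite := by
  have hcover : A ⊆ ⋃ i, ⋃ x ∈ G, {X ∈ A | X i = x} := fun X hX => by
    obtain ⟨i, hi⟩ := hA X hX
    exact mem_iUnion.2 ⟨i, mem_biUnion hi ⟨hX, rfl⟩⟩
  refine (finite_iUnion fun i => hG.biUnion fun x hx => ?_).subset hcover
  refine (hslice i x hx).of_finite_image fun X hX Y hY hXY => ?_
  rw [← Fin.insertNth_self_removeNth i X, ← Fin.insertNth_self_removeNth i Y, hXY, hX.2, hY.2]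

theorem exists_mem_Iic_neg_one_union_Ici_of_sum {ι : Type*} [Fintype ι] [Nonempty ι]
    {X : ι → ℝ} {δ : ℝ} (hX : ∀ i, X i ∈ Iic (-1) ∪ Ioi 0)
    (hδ : 0 < ∑ i, X i → Fintype.card ι * δ ≤ ∑ i, X i) :
    ∃ i, X i ∈ Iic (-1) ∪ Ici δ := by
  by_cases hneg : ∃ i, X i ≤ -1
  · obtain ⟨i, hi⟩ := hneg
    exact ⟨i, Or.inl hi⟩
  push Not at hneg
  have hpos : ∀ i, 0 < X i := fun i => (hX i).resolve_left (hneg i).not_ge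
  have hsum : ∑ _i : ι, δ ≤ ∑ i, X i := by
    simpa [Finset.sum_const, nsmul_eq_mul] using
      hδ (Finset.sum_pos (fun i _ => hpos i) Finset.univ_nonempty)
  obtain ⟨i, -, hi⟩ := Finset.exists_le_of_sum_le Finset.univ_nonempty hsum
  exact ⟨i, Or.inr hi⟩

def tuplesWithSum (S : Set ℝ) (m : ℕ) (c : ℝ) : Set (Fin m → ℝ) :=
  {X | (∀ i, X i ∈ S) ∧ ∑ i, X i = c}

section

variable {S : Set ℝ}

theorem removeNth_mem_tuplesWithSum {m : ℕ} {c : ℝ} {X : Fin (m + 1) → ℝ}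
    (hX : X ∈ tuplesWithSum S (m + 1) c) (i : Fin (m + 1)) :
    i.removeNth X ∈ tuplesWithSum S m (c - X i) := by
  refine ⟨fun j => hX.1 _, ?_⟩
  rw [← hX.2, Fin.sum_univ_succAbove X i]
  simp [Fin.removeNth]

theorem finite_inter_Iic_neg_one_union_Ici
    (hacc : ∀ δ : ℝ, 0 < δ → (S ∩ (Iic (-δ) ∪ Ici δ)).Finite) {δ : ℝ} (hδ : 0 < δ) :
    (S ∩ (Iic (-1) ∪ Ici δ)).Finite := by
  refine (hacc (min δ 1) (lt_min hδ one_pos)).subset (inter_subset_inter_right S ?_)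
  exact union_subset_union (Iic_subset_Iic.2 (neg_le_neg (min_le_right δ 1)))
    (Ici_subset_Ici.2 (min_le_left δ 1))

theorem finite_tuplesWithSum (hS : S ⊆ Iic (-1) ∪ Ioi 0)
    (hacc : ∀ δ : ℝ, 0 < δ → (S ∩ (Iic (-δ) ∪ Ici δ)).Finite) (m : ℕ) (c : ℝ) :
    (tuplesWithSum S m c).Finite := by
  induction m generalizing c with
  | zero => exact Set.subsingleton_of_subsingleton.finite
  | succ m ih =>
    obtain ⟨δ, hδ, hδc⟩ : ∃ δ > 0, 0 < c → (m + 1 : ℕ) * δ ≤ c := by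
      by_cases hc : 0 < c
      · exact ⟨c / (m + 1 : ℕ), by positivity, fun _ => (mul_div_cancel₀ _ (by positivity)).le⟩
      · exact ⟨1, one_pos, fun h => absurd h hc⟩
    refine (finite_inter_Iic_neg_one_union_Ici hacc hδ).of_forall_exists_mem_of_finite_removeNth
      (fun X hX => ?_) fun i x _ => (ih (c - x)).subset ?_
    · obtain ⟨i, hi⟩ := exists_mem_Iic_neg_one_union_Ici_of_sum (fun i => hS (hX.1 i))
        (by simpa only [hX.2, Fintype.card_fin] using hδc)
      exact ⟨i, hX.1 i, hi⟩
    · rintro _ ⟨X, ⟨hX, rfl⟩, rfl⟩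
      exact removeNth_mem_tuplesWithSum hX i

end

/-- If `S` is a set of nonzero reals with `S ⊆ (-∞,-1] ∪ (0,∞)` whose
only possible accumulation point is `0` (i.e. `S ∩ ((-∞,-δ] ∪ [δ,∞))` is finite for
every `δ > 0`), then for every `c ∈ ℝ` and `m ∈ ℕ` the set of `m`-tuples with entries
in `S` summing to `c` is finite. -/
theorem finitely_many_tuples_mixed
    (S : Set ℝ) (hS : S ⊆ Set.Iic (-1) ∪ Set.Ioi 0)
    (hacc : ∀ δ : ℝ, 0 < δ → (S ∩ (Set.Iic (-δ) ∪ Set.Ici δ)).Finite) :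
    ∀ (c : ℝ) (m : ℕ),
      {X : Fin m → ℝ | (∀ i, X i ∈ S) ∧ ∑ i, X i = c}.Finite :=
  fun c m => finite_tuplesWithSum hS hacc m c
end

section
/- Fix an integer k > 2 and let L_k = ({ (k/2)·p(p−1) + p − 1 : p ∈ ℤ } ∪ { (k−1)/(2k) + p(p+1)·k/2 − 1 : p ∈ ℤ }) \ {0} ⊂ ℚ (the set of nonzero Kovalevskaya exponents Λ = λ − 1 allowed by the first two families of the Morales–Ramis table). Then every element of L_k lies in [−1,0) ∪ (0,∞), and for every c ∈ ℝ and every m ∈ ℕ the set of m-tuples (Λ₁,…,Λ_m) ∈ L_k^m satisfying Σ_{j=1}^{m} 1/Λⱼ = c is finite. -/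
/-! The exponents of the two families are rationals with denominator dividing `2k` and are at
least `-1`, so below any bound there are only finitely many of them. For reciprocal sums over such
a set the Egyptian-fraction argument applies: if the smallest entry of a tuple is positive, all
entries are, and the `m` reciprocals, each at most the reciprocal of that entry, add up to `c`; so
the smallest entry is at most `max 0 (m / c)`. That leaves finitely many choices for it, and
removing it leaves an `(m - 1)`-tuple with reciprocal sum `c - 1 / (smallest entry)`, so induction
on `m` concludes. -/

open Set

section ReciprocalSums

variable {K : Type*} [Field K] [LinearOrder K] [IsStrictOrderedRing K]

lemma exists_le_max_zero_card_div_sum_one_div {ι : Type*} [Fintype ι] [Nonempty ι] (x : ι → K) :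
    ∃ j, x j ≤ max 0 (Fintype.card ι / ∑ i, 1 / x i) := by
  obtain ⟨j, hj⟩ := Finite.exists_min x
  refine ⟨j, ?_⟩
  rcases le_or_gt (x j) 0 with hnonpos | hpos
  · exact hnonpos.trans (le_max_left _ _)
  have hpos' : ∀ i, 0 < x i := fun i => hpos.trans_le (hj i)
  have hsum_pos : 0 < ∑ i, 1 / x i :=
    Finset.sum_pos (fun i _ => one_div_pos.2 (hpos' i)) Finset.univ_nonempty
  have hsum_le : ∑ i, 1 / x i ≤ Fintype.card ι * (1 / x j) := by
    calc ∑ i, 1 / x i ≤ ∑ _i : ι, 1 / x j :=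
          Finset.sum_le_sum fun i _ => one_div_le_one_div_of_le hpos (hj i)
      _ = Fintype.card ι * (1 / x j) := by simp
  refine le_trans ?_ (le_max_right _ _)
  rw [le_div_iff₀ hsum_pos]
  calc x j * ∑ i, 1 / x i ≤ x j * (Fintype.card ι * (1 / x j)) :=
        mul_le_mul_of_nonneg_left hsum_le hpos.le
    _ = Fintype.card ι := by field_simp

theorem finite_setOf_sum_one_div_eq {A : Set K} (hA : ∀ b, (A ∩ Iic b).Finite) (m : ℕ) (c : K) :
    {x : Fin m → K | (∀ j, x j ∈ A) ∧ ∑ j, 1 / x j = c}.Finite := by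
  induction m generalizing c with
  | zero => exact toFinite _
  | succ m ih =>
    set b : K := max 0 ((m + 1) / c)
    refine (finite_iUnion fun j : Fin (m + 1) =>
      (hA b).biUnion (t := fun v => Fin.insertNth j v '' _) fun v _ =>
        (ih (c - 1 / v)).image _).subset ?_
    rintro x ⟨hxA, hsum⟩
    obtain ⟨j, hjb⟩ := exists_le_max_zero_card_div_sum_one_div x
    rw [hsum, Fintype.card_fin, Nat.cast_succ] at hjb
    have hsum_removeNth : ∑ i, 1 / Fin.removeNth j x i = c - 1 / x j := by
      rw [← hsum, Fin.sum_univ_succAbove _ j]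
      simp [Fin.removeNth]
    simp only [mem_iUnion]
    exact ⟨j, x j, ⟨hxA j, hjb⟩, Fin.removeNth j x,
      ⟨fun i => hxA _, hsum_removeNth⟩, Fin.insertNth_self_removeNth j x⟩

variable [FloorRing K]

theorem finite_inter_Iic_of_forall_le_of_eq_intCast_div {A : Set K} {a N : K} (hN : 0 < N)
    (hA : ∀ x ∈ A, a ≤ x ∧ ∃ z : ℤ, x = z / N) (b : K) : (A ∩ Iic b).Finite := by
  refine ((Finset.Icc ⌊N * a⌋ ⌈N * b⌉).finite_toSet.image fun z : ℤ => (z : K) / N).subset ?_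
  rintro x ⟨hxA, hxb⟩
  obtain ⟨hax, z, rfl⟩ := hA x hxA
  rw [le_div_iff₀ hN, mul_comm] at hax
  rw [mem_Iic, div_le_iff₀ hN, mul_comm] at hxb
  refine ⟨z, Finset.mem_Icc.2 ⟨Int.floor_le_iff.2 ?_, Int.le_ceil_iff.2 ?_⟩, rfl⟩ <;> linarith

end ReciprocalSums

def moralesRamisExponents (k : ℕ) : Set ℚ :=
  {x | ∃ p : ℤ, x = (k : ℚ) / 2 * (p * (p - 1)) + p - 1} ∪
    {x | ∃ p : ℤ, x = ((k : ℚ) - 1) / (2 * k) + p * (p + 1) * (k : ℚ) / 2 - 1}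

lemma intCast_mul_add_one_nonneg {R : Type*} [Ring R] [LinearOrder R] [IsStrictOrderedRing R]
    (p : ℤ) : (0 : R) ≤ p * (p + 1) := by
  have : 0 ≤ p * (p + 1) := by
    rcases le_or_gt 0 p with hp | hp
    · positivity
    · exact mul_nonneg_of_nonpos_of_nonpos hp.le (by omega)
  exact_mod_cast this

lemma neg_one_le_of_mem_moralesRamisExponents {k : ℕ} (hk : 0 < k) {x : ℚ}
    (hx : x ∈ moralesRamisExponents k) : -1 ≤ x := by
  have hk1 : (1 : ℚ) ≤ k := by exact_mod_cast hk
  rcases hx with ⟨p, rfl⟩ | ⟨p, rfl⟩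
  · -- `p (p - 1)` and `p (p + 1) = p (p - 1) + 2 p` are both nonnegative
    have h₁ := intCast_mul_add_one_nonneg (R := ℚ) (p - 1)
    have h₂ := intCast_mul_add_one_nonneg (R := ℚ) p
    push_cast at h₁
    nlinarith
  · have h₁ : (0 : ℚ) ≤ ((k : ℚ) - 1) / (2 * k) := by
      apply div_nonneg <;> linarith
    have h₂ := intCast_mul_add_one_nonneg (R := ℚ) p
    have h₃ : (0 : ℚ) ≤ p * (p + 1) * (k : ℚ) / 2 := by positivity
    linarith

lemma exists_eq_intCast_div_of_mem_moralesRamisExponents {k : ℕ} (hk : 0 < k) {x : ℚ}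
    (hx : x ∈ moralesRamisExponents k) : ∃ z : ℤ, x = z / (2 * k) := by
  have hk0 : (k : ℚ) ≠ 0 := by positivity
  rcases hx with ⟨p, rfl⟩ | ⟨p, rfl⟩
  · exact ⟨k * k * (p * (p - 1)) + 2 * k * p - 2 * k, by push_cast; field_simp⟩
  · exact ⟨k - 1 + p * (p + 1) * k * k - 2 * k, by push_cast; field_simp⟩

/-- For a fixed integer `k > 2`, let `L_k ⊂ ℚ` be the set of nonzero
Kovalevskaya exponents `Λ = λ - 1` allowed by the first two families of the
Morales–Ramis table, i.e.
`L_k = ({ (k/2)p(p-1) + p - 1 : p ∈ ℤ } ∪ { (k-1)/(2k) + p(p+1)k/2 - 1 : p ∈ ℤ }) \ {0}`.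
Then every element of `L_k` lies in `[-1,0) ∪ (0,∞)`, and for every `c ∈ ℝ` and
`m ∈ ℕ` the set of `m`-tuples `(Λ₁,…,Λ_m) ∈ L_k^m` with `Σⱼ 1/Λⱼ = c` is finite. -/
theorem morales_ramis_exponents_finiteness (k : ℕ) (hk : 2 < k) :
    (∀ x ∈ (({x : ℚ | ∃ p : ℤ, x = (k : ℚ) / 2 * (p * (p - 1)) + p - 1} ∪
          {x : ℚ | ∃ p : ℤ, x = ((k : ℚ) - 1) / (2 * k) + p * (p + 1) * (k : ℚ) / 2 - 1})
          \ {0}),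
        (-1 ≤ x ∧ x < 0) ∨ 0 < x) ∧
    ∀ (c : ℝ) (m : ℕ),
      {Λ : Fin m → ℚ |
        (∀ j, Λ j ∈ (({x : ℚ | ∃ p : ℤ, x = (k : ℚ) / 2 * (p * (p - 1)) + p - 1} ∪
          {x : ℚ | ∃ p : ℤ, x = ((k : ℚ) - 1) / (2 * k) + p * (p + 1) * (k : ℚ) / 2 - 1})
          \ {0})) ∧
        ∑ j, (1 : ℝ) / (Λ j : ℝ) = c}.Finite := by
  have hk0 : 0 < k := by omega
  refine ⟨fun x ⟨hx, hx0⟩ => ?_, fun c m => ?_⟩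
  · rcases lt_or_gt_of_ne hx0 with hneg | hpos
    · exact Or.inl ⟨neg_one_le_of_mem_moralesRamisExponents hk0 hx, hneg⟩
    · exact Or.inr hpos
  · set A : Set ℝ := (↑) '' moralesRamisExponents k
    have hA : ∀ b, (A ∩ Iic b).Finite := by
      refine finite_inter_Iic_of_forall_le_of_eq_intCast_div (a := -1) (N := 2 * k)
        (by positivity) ?_
      rintro _ ⟨x, hx, rfl⟩
      obtain ⟨z, rfl⟩ := exists_eq_intCast_div_of_mem_moralesRamisExponents hk0 hx
      refine ⟨?_, z, by push_cast; rfl⟩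
      exact_mod_cast neg_one_le_of_mem_moralesRamisExponents hk0 hx
    refine ((finite_setOf_sum_one_div_eq hA m c).preimage
      (Rat.cast_injective.comp_left.injOn)).subset ?_
    rintro Λ ⟨hΛ, hsum⟩
    exact ⟨fun j => ⟨Λ j, (hΛ j).1, rfl⟩, hsum⟩
end
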